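/- arXiv:2412.02462 — 2 statements merged into one kernel-verified Lean document; each statement's English description precedes it below -/
import Mathlib

section
/- Under these hypotheses, for every k ≥ 1 the family of indices j ≥ 1 with j ≠ k, j ↦ (x_j − x_k)/(x_j − q·x_k), is multipliable and ∏_{j≥1, j≠k} (x_j − x_k)/(x_j − q·x_k) = (q−1)·x_k. -/
/-- The deformed exponential function `f(x;q) = ∑_{n≥0} x^n q^(n(n-1)/2) / n!`. -/
noncomputable def deformedExp (x q : ℂ) : ℂ :=
  ∑' n : ℕ, x ^ n * q ^ (n * (n - 1) / 2) / (n.factorial : ℂ)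

/-!
Write `f = deformedExp · q`. Reading the Hadamard product at `z = 1` gives `∑ 1/|x_j| < ∞`, so
`F(z) = ∏_{j ≠ k} (1 - z/x_j)` converges locally uniformly: `F` is continuous, vanishes only at
the `x_j`, and `f(z) = (1 - z/x_k) F(z)`. Differentiating at `x_k` and using `f'(z) = f(qz)`
gives `F(x_k) = -x_k f(q x_k)`, while `F(q x_k) = f(q x_k) / (1 - q)`; the quotient of the two
products is `(q - 1) x_k` as soon as `f(q x_k) ≠ 0`.

That `q x_k` is not a zero is an interlacing argument. `f` is real on the real line, so by Rolle
`f(q ·)` vanishes in each gap `(x_{j+1}, x_j)`, i.e. the gap contains some `x_{σ j} / q`. Since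
`x_i / q < x_i`, we get `σ j ≤ j`, and the gaps are disjoint, so `σ` is injective; hence `σ = id`
and `x_{j+1} < x_j / q < x_j` for every `j`, which rules out `q x_k = x_m`.
-/

open Filter Complex ComplexConjugate

theorem Finset.sum_le_prod_one_add {ι R : Type*} [CommSemiring R] [PartialOrder R]
    [IsOrderedRing R] {f : ι → R} (hf : ∀ i, 0 ≤ f i) (s : Finset ι) :
    ∑ i ∈ s, f i ≤ ∏ i ∈ s, (1 + f i) := by
  classical
  induction s using Finset.induction with
  | empty => simp
  | insert i s hi ih =>
    rw [sum_insert hi, prod_insert hi, add_mul, one_mul, add_comm (f i)]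
    have h1 : 1 ≤ ∏ j ∈ s, (1 + f j) := one_le_prod fun j _ => le_add_of_nonneg_right (hf j)
    exact add_le_add ih (le_mul_of_one_le_right (hf i) h1)

theorem Real.summable_of_multipliable_one_add {ι : Type*} {f : ι → ℝ} (hf : ∀ i, 0 ≤ f i)
    (h : Multipliable fun i => 1 + f i) : Summable f := by
  classical
  obtain ⟨r, -, s₁, hs₁⟩ := h.eventually_bounded_finsetProd
  refine summable_of_sum_le hf (c := r) fun s => ?_
  calc ∑ i ∈ s, f i ≤ ∑ i ∈ s ∪ s₁, f i :=
        Finset.sum_le_sum_of_subset_of_nonneg Finset.subset_union_left fun i _ _ => hf i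
    _ ≤ ∏ i ∈ s ∪ s₁, (1 + f i) := Finset.sum_le_prod_one_add hf _
    _ ≤ r := hs₁ _ Finset.subset_union_right

theorem HasDerivAt.eq_of_eq_sub_mul {𝕜 : Type*} [NontriviallyNormedField 𝕜] {f G : 𝕜 → 𝕜}
    {a f' : 𝕜} (hf : HasDerivAt f f' a) (hfG : ∀ z, f z = (z - a) * G z)
    (hG : ContinuousAt G a) : f' = G a := by
  refine tendsto_nhds_unique (hasDerivAt_iff_tendsto_slope.mp hf)
    ((hG.tendsto.mono_left nhdsWithin_le_nhds).congr' ?_)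
  filter_upwards [self_mem_nhdsWithin] with z hz
  rw [slope_def_field, hfG, hfG a, sub_self, zero_mul, sub_zero,
    mul_div_cancel_left₀ _ (sub_ne_zero.mpr hz)]

theorem Function.Injective.eq_id_of_le {α : Type*} [PartialOrder α] [WellFoundedLT α]
    {σ : α → α} (hσ : Function.Injective σ) (hle : ∀ a, σ a ≤ a) : σ = id := by
  funext a
  induction a using WellFoundedLT.induction with
  | _ a ih =>
    rcases (hle a).eq_or_lt with h | h
    · exact h
    · exact absurd (hσ (ih _ h)) h.ne

theorem Complex.hasProd_ofReal {ι : Type*} {f : ι → ℝ} {a : ℝ} :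
    HasProd (fun i => (f i : ℂ)) a ↔ HasProd f a :=
  isometry_ofReal.isEmbedding.isInducing.hasProd_iff (g := ofRealHom) f a

section WeierstrassProduct

variable {ι : Type*} {a : ι → ℂ}

theorem summable_norm_neg_div (ha : Summable fun i => ‖a i‖⁻¹) (z : ℂ) :
    Summable fun i => ‖-(z / a i)‖ := by
  simpa [div_eq_mul_inv] using ha.mul_left ‖z‖

theorem multipliable_one_sub_div (ha : Summable fun i => ‖a i‖⁻¹) (z : ℂ) :
    Multipliable fun i => 1 - z / a i := by
  simpa [sub_eq_add_neg] using multipliable_one_add_of_summable (summable_norm_neg_div ha z)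

theorem tprod_one_sub_div_ne_zero (ha : Summable fun i => ‖a i‖⁻¹) {z : ℂ}
    (hz : ∀ i, z ≠ a i) : ∏' i, (1 - z / a i) ≠ 0 := by
  have hfac : ∀ i, 1 + -(z / a i) ≠ 0 := fun i h => by
    rcases eq_or_ne (a i) 0 with h0 | h0
    · simp [h0] at h
    · exact hz i ((div_eq_one_iff_eq h0).mp (by linear_combination -h))
  simpa [sub_eq_add_neg] using
    tprod_one_add_ne_zero_of_summable hfac (summable_norm_neg_div ha z)

theorem continuous_tprod_one_sub_div (ha : Summable fun i => ‖a i‖⁻¹) :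
    Continuous fun z => ∏' i, (1 - z / a i) := by
  refine continuous_iff_continuousAt.mpr fun z₀ => ?_
  have hK := isCompact_closedBall z₀ 1
  have hbound : ∀ᶠ i in cofinite, ∀ z ∈ Metric.closedBall z₀ 1,
      ‖-(z / a i)‖ ≤ (‖z₀‖ + 1) * ‖a i‖⁻¹ := by
    refine Filter.Eventually.of_forall fun i z hz => ?_
    rw [norm_neg, norm_div, div_eq_mul_inv]
    gcongr
    exact norm_le_norm_add_const_of_dist_le hz
  have hunif := (Summable.hasProdUniformlyOn_one_add hK (ha.mul_left _) hbound
    fun i => by fun_prop).tendstoUniformlyOn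
  have hcont := hunif.continuousOn (Filter.Eventually.of_forall fun s => by fun_prop).frequently
  simpa [sub_eq_add_neg] using hcont.continuousAt (Metric.closedBall_mem_nhds z₀ one_pos)

theorem tprod_one_sub_div_eq_mul_tprod_ne (ha : Summable fun i => ‖a i‖⁻¹) (k : ι) (z : ℂ) :
    ∏' i, (1 - z / a i) = (1 - z / a k) * ∏' i : {i // i ≠ k}, (1 - z / a i) := by
  have hk : HasProd (fun i : ({k} : Set ι) => 1 - z / a i) (1 - z / a k) :=
    hasProd_singleton k fun i => 1 - z / a i
  have hne : HasProd (fun i : ({k}ᶜ : Set ι) => 1 - z / a i)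
      (∏' i : {i // i ≠ k}, (1 - z / a i)) :=
    (multipliable_one_sub_div (ha.subtype ({k}ᶜ : Set ι)) z).hasProd
  exact (HasProd.mul_compl (f := fun i => 1 - z / a i) hk hne).tprod_eq

end WeierstrassProduct

noncomputable def deformedExpCoeff (q : ℂ) (n : ℕ) : ℂ :=
  q ^ (n * (n - 1) / 2) / (n.factorial : ℂ)

section DeformedExp

variable {q : ℂ}

theorem deformedExp_eq_tsum (x q : ℂ) :
    deformedExp x q = ∑' n, x ^ n * deformedExpCoeff q n := by
  simp only [deformedExp, deformedExpCoeff, mul_div_assoc]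

theorem norm_deformedExpCoeff_le (hq : ‖q‖ ≤ 1) (n : ℕ) :
    ‖deformedExpCoeff q n‖ ≤ (n.factorial : ℝ)⁻¹ := by
  rw [deformedExpCoeff, norm_div, norm_pow, Complex.norm_natCast, div_eq_mul_inv]
  exact mul_le_of_le_one_left (by positivity) (pow_le_one₀ (norm_nonneg q) hq)

theorem succ_mul_deformedExpCoeff_succ (q : ℂ) (n : ℕ) :
    (n + 1 : ℂ) * deformedExpCoeff q (n + 1) = q ^ n * deformedExpCoeff q n := by
  simp only [deformedExpCoeff, Nat.triangle_succ, pow_add, Nat.factorial_succ, Nat.cast_mul]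
  push_cast
  field_simp

theorem summable_deformedExp (hq : ‖q‖ ≤ 1) (x : ℂ) :
    Summable fun n => x ^ n * deformedExpCoeff q n := by
  refine .of_norm_bounded (Real.summable_pow_div_factorial ‖x‖) fun n => ?_
  rw [norm_mul, norm_pow, div_eq_mul_inv]
  gcongr
  exact norm_deformedExpCoeff_le hq n

theorem hasDerivAt_deformedExp (hq : ‖q‖ ≤ 1) (z : ℂ) :
    HasDerivAt (fun x => deformedExp x q) (deformedExp (q * z) q) z := by
  set R := ‖z‖ + 1
  have hderiv : ∀ (n : ℕ) (y : ℂ), HasDerivAt (fun x => x ^ n * deformedExpCoeff q n)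
      (n * y ^ (n - 1) * deformedExpCoeff q n) y :=
    fun n y => (hasDerivAt_pow n y).mul_const (deformedExpCoeff q n)
  have hbound : ∀ n : ℕ, ∀ y ∈ Metric.ball (0 : ℂ) R,
      ‖(n : ℂ) * y ^ (n - 1) * deformedExpCoeff q n‖ ≤ n * R ^ (n - 1) * (n.factorial : ℝ)⁻¹ := by
    intro n y hy
    rw [norm_mul, norm_mul, Complex.norm_natCast, norm_pow]
    gcongr
    · exact (mem_ball_zero_iff.mp hy).le
    · exact norm_deformedExpCoeff_le hq n
  have hsum : Summable fun n : ℕ => n * R ^ (n - 1) * (n.factorial : ℝ)⁻¹ := by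
    refine (summable_nat_add_iff 1).mp ((Real.summable_pow_div_factorial R).congr fun n => ?_)
    rw [Nat.add_sub_cancel, Nat.factorial_succ, Nat.cast_mul]
    field_simp
  have hz : z ∈ Metric.ball (0 : ℂ) R := by simp [R]
  have := hasDerivAt_tsum_of_isPreconnected hsum Metric.isOpen_ball
    (convex_ball 0 R).isPreconnected (fun n y _ => hderiv n y) hbound hz
    (summable_deformedExp hq z) hz
  have hfun : (fun x => deformedExp x q) = fun x => ∑' n, x ^ n * deformedExpCoeff q n :=
    funext fun x => deformedExp_eq_tsum x q
  rw [hfun]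
  refine this.congr_deriv ?_
  have hshift : HasSum
      (fun n : ℕ => ((n + 1 : ℕ) : ℂ) * z ^ (n + 1 - 1) * deformedExpCoeff q (n + 1))
      (deformedExp (q * z) q) := by
    rw [deformedExp_eq_tsum]
    convert (summable_deformedExp hq (q * z)).hasSum using 2 with n
    rw [Nat.add_sub_cancel, mul_right_comm, Nat.cast_succ, succ_mul_deformedExpCoeff_succ, mul_pow]
    ring
  simpa using (HasSum.zero_add
    (f := fun n : ℕ => (n : ℂ) * z ^ (n - 1) * deformedExpCoeff q n) hshift).tsum_eq

theorem conj_deformedExp (x q : ℂ) :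
    conj (deformedExp x q) = deformedExp (conj x) (conj q) := by
  simp [deformedExp, Complex.conj_tsum]

theorem deformedExp_ofReal_im (t q : ℝ) : (deformedExp t q).im = 0 := by
  rw [← Complex.conj_eq_iff_im, conj_deformedExp, conj_ofReal, conj_ofReal]

theorem ofReal_re_deformedExp (t q : ℝ) : ((deformedExp t q).re : ℂ) = deformedExp t q :=
  Complex.ext rfl (deformedExp_ofReal_im t q).symm

end DeformedExp

section Zeros

variable {q : ℝ} {x : ℕ → ℝ}

theorem summable_inv_norm_of_hasProd (hneg : ∀ j, x j < 0)
    (hprod : ∀ z : ℂ, HasProd (fun j => 1 - z / (x j : ℂ)) (deformedExp z q)) :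
    Summable fun j => ‖(x j : ℂ)‖⁻¹ := by
  have h1 : HasProd (fun j => ((1 + |x j|⁻¹ : ℝ) : ℂ)) ((deformedExp 1 q).re : ℂ) := by
    convert hprod 1 using 2 with j
    · rw [abs_of_neg (hneg j)]
      push_cast
      ring
    · exact_mod_cast ofReal_re_deformedExp 1 q
  have h2 := Real.summable_of_multipliable_one_add (fun j => inv_nonneg.mpr (abs_nonneg _))
    (Complex.hasProd_ofReal.mp h1).multipliable
  simpa [Complex.norm_real] using h2

variable (hsum : Summable fun j => ‖(x j : ℂ)‖⁻¹)
  (hprod : ∀ z : ℂ, HasProd (fun j => 1 - z / (x j : ℂ)) (deformedExp z q))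
include hsum hprod

theorem deformedExp_eq_mul_tprod_ne (k : ℕ) (z : ℂ) :
    deformedExp z q = (1 - z / x k) * ∏' j : {j // j ≠ k}, (1 - z / x j) := by
  rw [← (hprod z).tprod_eq, tprod_one_sub_div_eq_mul_tprod_ne hsum]

theorem deformedExp_eq_zero_iff (hx : ∀ j, x j ≠ 0) {z : ℂ} :
    deformedExp z q = 0 ↔ ∃ j, z = x j := by
  constructor
  · intro h
    by_contra! hz
    exact tprod_one_sub_div_ne_zero hsum hz ((hprod z).tprod_eq.trans h)
  · rintro ⟨j, rfl⟩
    rw [deformedExp_eq_mul_tprod_ne hsum hprod j, div_self (ofReal_ne_zero.mpr (hx j)),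
      sub_self, zero_mul]

theorem exists_div_mem_Ioo (hq : q ∈ Set.Ioo 0 1) (hanti : StrictAnti x) (hx : ∀ j, x j ≠ 0)
    (j : ℕ) : ∃ i, x i / q ∈ Set.Ioo (x (j + 1)) (x j) := by
  have hq' : ‖(q : ℂ)‖ ≤ 1 := by simpa [abs_of_pos hq.1] using hq.2.le
  set g : ℝ → ℝ := fun t => (deformedExp t q).re
  have hg : ∀ t, HasDerivAt g (g (q * t)) t := fun t => by
    simpa [g] using (hasDerivAt_deformedExp hq' t).real_of_complex
  have hgx : ∀ i, g (x i) = 0 := fun i => by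
    simp [g, (deformedExp_eq_zero_iff hsum hprod hx).mpr ⟨i, rfl⟩]
  obtain ⟨c, hc, hc0⟩ := exists_hasDerivAt_eq_zero (hanti j.lt_succ_self)
    (fun t _ => (hg t).continuousAt.continuousWithinAt) ((hgx _).trans (hgx _).symm)
    fun t _ => hg t
  obtain ⟨i, hi⟩ := (deformedExp_eq_zero_iff hsum hprod hx).mp
    (by rw [← ofReal_re_deformedExp]; exact_mod_cast hc0)
  refine ⟨i, ?_⟩
  rwa [← ofReal_inj.mp hi, mul_div_cancel_left₀ _ hq.1.ne']

theorem div_mem_Ioo (hq : q ∈ Set.Ioo 0 1) (hanti : StrictAnti x) (hneg : ∀ j, x j < 0)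
    (j : ℕ) : x j / q ∈ Set.Ioo (x (j + 1)) (x j) := by
  choose σ hσ using exists_div_mem_Ioo hsum hprod hq hanti fun j => (hneg j).ne
  have hdiv_lt : ∀ i, x i / q < x i := fun i => by
    rw [div_lt_iff₀ hq.1]
    nlinarith [hneg i, hq.2]
  have hle : ∀ j, σ j ≤ j := fun j =>
    Nat.lt_succ_iff.mp (hanti.lt_iff_gt.mp ((hσ j).1.trans (hdiv_lt _)))
  have hanti_σ : StrictAnti fun j => x (σ j) / q :=
    strictAnti_nat_of_succ_lt fun j => (hσ (j + 1)).2.trans (hσ j).1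
  have hσ_id := (hanti_σ.injective.of_comp (f := fun i => x i / q)).eq_id_of_le hle
  simpa [hσ_id] using hσ j

theorem mul_ne_apply (hq : q ∈ Set.Ioo 0 1) (hanti : StrictAnti x) (hneg : ∀ j, x j < 0)
    (k m : ℕ) : q * x k ≠ x m := by
  intro h
  have hk : x m / q = x k := by rw [← h, mul_div_cancel_left₀ _ hq.1.ne']
  obtain ⟨h1, h2⟩ := div_mem_Ioo hsum hprod hq hanti hneg m
  rw [hk] at h1 h2
  have := hanti.lt_iff_gt.mp h1
  have := hanti.lt_iff_gt.mp h2
  omega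

theorem hasProd_ne_one_sub_self_div (hq : |q| ≤ 1) (hx : ∀ j, x j ≠ 0) (k : ℕ) :
    HasProd (fun j : {j // j ≠ k} => 1 - (x k : ℂ) / x j) (-x k * deformedExp (q * x k) q) := by
  have hq' : ‖(q : ℂ)‖ ≤ 1 := by simpa using hq
  have hxk : (x k : ℂ) ≠ 0 := ofReal_ne_zero.mpr (hx k)
  have hsumk : Summable fun j : {j // j ≠ k} => ‖(x j : ℂ)‖⁻¹ := hsum.subtype ({k}ᶜ : Set ℕ)
  set F := fun z : ℂ => ∏' j : {j // j ≠ k}, (1 - z / x j)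
  have hF : F (x k) = -x k * deformedExp (q * x k) q := by
    have := (hasDerivAt_deformedExp hq' (x k)).eq_of_eq_sub_mul (G := fun z => -F z / x k)
      (fun z => by rw [deformedExp_eq_mul_tprod_ne hsum hprod k z]; field_simp; ring)
      ((continuous_tprod_one_sub_div hsumk).continuousAt.neg.div_const _)
    rw [this]
    field_simp
  rw [← hF]
  exact (multipliable_one_sub_div hsumk _).hasProd

theorem hasProd_ne_one_sub_mul_self_div (hq : q ≠ 1) (hx : ∀ j, x j ≠ 0) (k : ℕ) :
    HasProd (fun j : {j // j ≠ k} => 1 - (q * x k : ℂ) / x j)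
      (deformedExp (q * x k) q / (1 - q)) := by
  have hsumk : Summable fun j : {j // j ≠ k} => ‖(x j : ℂ)‖⁻¹ := hsum.subtype ({k}ᶜ : Set ℕ)
  have h1q : (1 - q : ℂ) ≠ 0 := sub_ne_zero.mpr (by exact_mod_cast hq.symm)
  rw [deformedExp_eq_mul_tprod_ne hsum hprod k,
    mul_div_cancel_right₀ _ (ofReal_ne_zero.mpr (hx k)), mul_div_cancel_left₀ _ h1q]
  exact (multipliable_one_sub_div hsumk _).hasProd

end Zeros

theorem stmt7_general (q : ℝ) (hq : q ∈ Set.Ioo (0 : ℝ) 1) (x : ℕ → ℝ)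
    (hanti : StrictAnti x) (hneg : ∀ j, x j < 0)
    (hprod : ∀ z : ℂ, HasProd (fun j : ℕ => 1 - z / (x j : ℂ)) (deformedExp z (q : ℂ))) :
    ∀ k : ℕ, HasProd (fun j : {j : ℕ // j ≠ k} => (x j.1 - x k) / (x j.1 - q * x k))
      ((q - 1) * x k) := by
  intro k
  have hx : ∀ j, x j ≠ 0 := fun j => (hneg j).ne
  have hsum := summable_inv_norm_of_hasProd hneg hprod
  have hqx : deformedExp (q * x k) q ≠ 0 := fun h => by
    obtain ⟨m, hm⟩ := (deformedExp_eq_zero_iff hsum hprod hx).mp h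
    exact mul_ne_apply hsum hprod hq hanti hneg k m (by exact_mod_cast hm)
  have h1q : (1 - q : ℂ) ≠ 0 := sub_ne_zero.mpr (by exact_mod_cast hq.2.ne')
  have hratio := (hasProd_ne_one_sub_self_div hsum hprod
    ((abs_of_pos hq.1).trans_le hq.2.le) hx k).div₀
    (hasProd_ne_one_sub_mul_self_div hsum hprod hq.2.ne hx k) (div_ne_zero hqx h1q)
  have hterm : ∀ j : {j // j ≠ k}, (1 - (x k : ℂ) / x j) / (1 - q * x k / x j) =
      ((x j - x k) / (x j - q * x k) : ℝ) := fun j => by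
    have hxj : (x j : ℂ) ≠ 0 := ofReal_ne_zero.mpr (hx j)
    push_cast
    rw [one_sub_div hxj, one_sub_div hxj, div_div_div_cancel_right₀ hxj]
  have hval : -(x k : ℂ) * deformedExp (q * x k) q / (deformedExp (q * x k) q / (1 - q)) =
      ((q - 1) * x k : ℝ) := by
    rw [div_div_eq_mul_div, mul_right_comm, mul_div_cancel_right₀ _ hqx]
    push_cast
    ring
  simp only [hterm, hval] at hratio
  exact Complex.hasProd_ofReal.mp hratio

theorem stmt7 (q : ℝ) (hq : q ∈ Set.Ioo (0 : ℝ) 1) (x : ℕ → ℝ)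
    (hanti : StrictAnti x) (hneg : ∀ j, x j < 0)
    (hzero : ∀ j, deformedExp ((x j : ℂ)) ((q : ℂ)) = 0)
    (hprod : ∀ z : ℂ, HasProd (fun j : ℕ => 1 - z / (x j : ℂ)) (deformedExp z (q : ℂ))) :
    ∀ k : ℕ, HasProd (fun j : {j : ℕ // j ≠ k} => (x j.1 - x k) / (x j.1 - q * x k))
      ((q - 1) * x k) :=
  stmt7_general q hq x hanti hneg hprod
end

section
/- For every integer k ≥ 1, every q ∈ ℂ with |q| ≤ 1/20 and all w, w′ ∈ ℂ with |w − 1| ≤ 1/2 and |w′ − 1| ≤ 1/2, one has |F_k(w;q) − F_k(w′;q)| ≤ 10·|w − w′|. -/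
/-- `α_i(k) = ∏_{l=1}^{i} (1 - l/k)`. -/
noncomputable def alphaCoef (i k : ℕ) : ℝ :=
  ∏ l ∈ Finset.Icc 1 i, (1 - (l : ℝ) / (k : ℝ))

/-- `α_i(-k)⁻¹ = k^i · k! / (k+i)!`. -/
noncomputable def alphaNegInv (i k : ℕ) : ℝ :=
  (k : ℝ) ^ i * (k.factorial : ℝ) / ((k + i).factorial : ℝ)

/-- The `i`-th term of the series defining `F_k(w;q)`. -/
noncomputable def Fterm (k : ℕ) (w q : ℂ) (i : ℕ) : ℂ :=
  (-1 : ℂ) ^ i * ((alphaCoef i k : ℂ) * w ^ (-(i : ℤ)) - (alphaNegInv i k : ℂ) * w ^ (i + 1)) *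
    q ^ (i * (i + 1) / 2 - 1)

/-- `F_k(w;q) = ∑_{i≥1} (-1)^i [α_i(k) w^{-i} - α_i(-k)⁻¹ w^{i+1}] q^{i(i+1)/2 - 1}`. -/
noncomputable def FK (k : ℕ) (w q : ℂ) : ℂ :=
  ∑' i : ℕ, Fterm k w q (i + 1)

/-!
Each term of the series is `(-1)^i (α w⁻ⁱ - β wⁱ⁺¹) q^{e_i}` with `|α|, |β| ≤ 1` and `e_i ≥ i - 1`.
On the disc `‖w - 1‖ ≤ 1/2` both `w` and `w⁻¹` lie in the closed ball of radius `2`, where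
`x ↦ xⁿ⁺¹` is `(n+1) 2ⁿ ≤ 4ⁿ`-Lipschitz and `w ↦ w⁻¹` is `4`-Lipschitz. Hence the `i = j + 1`st
term is `8 · 4ʲ · 20⁻ʲ = 8 · 5⁻ʲ`-Lipschitz, and these constants sum to exactly `10`.
-/

open Finset

lemma abs_alphaCoef_le_one (i k : ℕ) : |alphaCoef i k| ≤ 1 := by
  unfold alphaCoef
  by_cases hvanish : 0 < k ∧ k ≤ i
  · rw [prod_eq_zero (mem_Icc.mpr hvanish) (by simp [hvanish.1.ne']), abs_zero]
    exact zero_le_one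
  rw [abs_prod]
  refine prod_le_one (fun _ _ ↦ abs_nonneg _) fun l hl ↦ ?_
  have hlk : (l : ℝ) / k ≤ 1 := by
    rcases Nat.eq_zero_or_pos k with rfl | hk
    · simp -- `l / 0 = 0`, so `alphaCoef i 0 = 1`
    · rw [div_le_one (by positivity)]
      exact_mod_cast (mem_Icc.mp hl).2.trans (not_le.mp fun h ↦ hvanish ⟨hk, h⟩).le
  rw [abs_le]
  constructor <;> nlinarith [show 0 ≤ (l : ℝ) / k by positivity]

lemma abs_alphaNegInv_le_one (i k : ℕ) : |alphaNegInv i k| ≤ 1 := by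
  unfold alphaNegInv
  rw [abs_of_nonneg (by positivity), div_le_one (by positivity)]
  calc (k : ℝ) ^ i * k.factorial ≤ k.factorial * (k + 1) ^ i := by
        rw [mul_comm]; gcongr; linarith
    _ ≤ (k + i).factorial := by exact_mod_cast Nat.factorial_mul_pow_le_factorial

lemma norm_ofReal_mul_sub_ofReal_mul_le {a b : ℝ} (ha : |a| ≤ 1) (hb : |b| ≤ 1) (x y : ℂ) :
    ‖(a : ℂ) * x - b * y‖ ≤ ‖x‖ + ‖y‖ :=
  calc ‖(a : ℂ) * x - b * y‖ ≤ |a| * ‖x‖ + |b| * ‖y‖ := by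
        simpa only [norm_mul, Complex.norm_real, Real.norm_eq_abs] using
          norm_sub_le ((a : ℂ) * x) (b * y)
    _ ≤ ‖x‖ + ‖y‖ := by gcongr <;> apply mul_le_of_le_one_left (norm_nonneg _) <;> assumption

section PowLipschitz

variable {R : Type*} [SeminormedRing R] [NormOneClass R] {x y : R}

lemma norm_pow_succ_sub_pow_succ_le {M : ℝ} (hx : ‖x‖ ≤ M) (hy : ‖y‖ ≤ M) (n : ℕ) :
    ‖x ^ (n + 1) - y ^ (n + 1)‖ ≤ (n + 1) * M ^ n * ‖x - y‖ := by
  have hM : 0 ≤ M := (norm_nonneg x).trans hx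
  induction n with
  | zero => simp
  | succ n ih =>
    calc ‖x ^ (n + 1 + 1) - y ^ (n + 1 + 1)‖
        = ‖x ^ (n + 1) * (x - y) + (x ^ (n + 1) - y ^ (n + 1)) * y‖ := by noncomm_ring
      _ ≤ ‖x‖ ^ (n + 1) * ‖x - y‖ + ‖x ^ (n + 1) - y ^ (n + 1)‖ * ‖y‖ :=
        (norm_add_le _ _).trans (add_le_add
          ((norm_mul_le _ _).trans (by gcongr; exact norm_pow_le _ _)) (norm_mul_le _ _))
      _ ≤ M ^ (n + 1) * ‖x - y‖ + (n + 1) * M ^ n * ‖x - y‖ * M := by gcongr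
      _ = (↑(n + 1) + 1) * M ^ (n + 1) * ‖x - y‖ := by push_cast; ring

lemma norm_pow_succ_sub_pow_succ_le_four_pow (hx : ‖x‖ ≤ 2) (hy : ‖y‖ ≤ 2) (n : ℕ) :
    ‖x ^ (n + 1) - y ^ (n + 1)‖ ≤ 4 ^ n * ‖x - y‖ :=
  calc ‖x ^ (n + 1) - y ^ (n + 1)‖ ≤ (n + 1) * 2 ^ n * ‖x - y‖ :=
        norm_pow_succ_sub_pow_succ_le hx hy n
    _ ≤ 2 ^ n * 2 ^ n * ‖x - y‖ := by
        gcongr; exact_mod_cast Nat.lt_two_pow_self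
    _ = 4 ^ n * ‖x - y‖ := by rw [← mul_pow]; norm_num

end PowLipschitz

lemma norm_inv_sub_inv_le {𝕜 : Type*} [NormedDivisionRing 𝕜] {x y : 𝕜} {r : ℝ} (hr : 0 < r)
    (hx : r ≤ ‖x‖) (hy : r ≤ ‖y‖) : ‖x⁻¹ - y⁻¹‖ ≤ ‖x - y‖ / r ^ 2 := by
  have hx0 : x ≠ 0 := norm_pos_iff.mp (hr.trans_le hx)
  have hy0 : y ≠ 0 := norm_pos_iff.mp (hr.trans_le hy)
  rw [← dist_eq_norm, ← dist_eq_norm, dist_inv_inv₀ hx0 hy0, sq]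
  gcongr

section UnitDisc

variable {w : ℂ}

lemma norm_le_two_of_norm_sub_one_le (hw : ‖w - 1‖ ≤ 1 / 2) : ‖w‖ ≤ 2 := by
  have := norm_le_norm_add_norm_sub' w 1
  rw [norm_one] at this
  linarith

lemma half_le_norm_of_norm_sub_one_le (hw : ‖w - 1‖ ≤ 1 / 2) : 1 / 2 ≤ ‖w‖ := by
  have := norm_sub_norm_le 1 w
  rw [norm_one, norm_sub_rev] at this
  linarith

lemma norm_inv_le_two_of_norm_sub_one_le (hw : ‖w - 1‖ ≤ 1 / 2) : ‖w⁻¹‖ ≤ 2 := by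
  rw [norm_inv]
  exact inv_le_of_inv_le₀ (by norm_num) (by linarith [half_le_norm_of_norm_sub_one_le hw])

end UnitDisc

lemma le_succ_mul_succ_succ_div_two_sub_one (j : ℕ) : j ≤ (j + 1) * (j + 1 + 1) / 2 - 1 := by
  have : j + 1 ≤ (j + 1) * (j + 1 + 1) / 2 :=
    (Nat.le_div_iff_mul_le two_pos).mpr (Nat.mul_le_mul_left _ (by omega))
  omega

lemma norm_pow_triangular_le {q : ℂ} {r : ℝ} (hq : ‖q‖ ≤ r) (hr : r ≤ 1) (j : ℕ) :
    ‖q ^ ((j + 1) * (j + 1 + 1) / 2 - 1)‖ ≤ r ^ j := by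
  rw [norm_pow]
  calc ‖q‖ ^ ((j + 1) * (j + 1 + 1) / 2 - 1) ≤ ‖q‖ ^ j :=
        pow_le_pow_of_le_one (norm_nonneg q) (hq.trans hr) (le_succ_mul_succ_succ_div_two_sub_one j)
    _ ≤ r ^ j := by gcongr

lemma Fterm_succ (k : ℕ) (w q : ℂ) (j : ℕ) :
    Fterm k w q (j + 1) = (-1) ^ (j + 1) * ((alphaCoef (j + 1) k : ℂ) * w⁻¹ ^ (j + 1)
      - (alphaNegInv (j + 1) k : ℂ) * w ^ (j + 1 + 1)) * q ^ ((j + 1) * (j + 1 + 1) / 2 - 1) := by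
  rw [Fterm, zpow_neg, zpow_natCast, inv_pow]

section TermBounds

variable (k : ℕ) {q w w' : ℂ} (hq : ‖q‖ ≤ 1 / 20) (hw : ‖w - 1‖ ≤ 1 / 2) (hw' : ‖w' - 1‖ ≤ 1 / 2)
include hq hw

lemma norm_Fterm_succ_le (j : ℕ) : ‖Fterm k w q (j + 1)‖ ≤ 6 * (1 / 10) ^ j := by
  have hq_pow := norm_pow_triangular_le hq (by norm_num) j
  have hw_pow : ‖w ^ (j + 1 + 1)‖ ≤ 2 ^ (j + 1 + 1) :=
    (norm_pow_le _ _).trans (by gcongr; exact norm_le_two_of_norm_sub_one_le hw)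
  have hw_inv_pow : ‖w⁻¹ ^ (j + 1)‖ ≤ 2 ^ (j + 1) :=
    (norm_pow_le _ _).trans (by gcongr; exact norm_inv_le_two_of_norm_sub_one_le hw)
  rw [Fterm_succ, norm_mul, norm_mul, norm_pow, norm_neg, norm_one, one_pow, one_mul]
  calc _ ≤ (2 ^ (j + 1) + 2 ^ (j + 1 + 1)) * (1 / 20 : ℝ) ^ j := by
        gcongr
        exact (norm_ofReal_mul_sub_ofReal_mul_le (abs_alphaCoef_le_one _ _)
          (abs_alphaNegInv_le_one _ _) _ _).trans (add_le_add hw_inv_pow hw_pow)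
    _ = 6 * (1 / 10) ^ j := by
        rw [show (1 / 10 : ℝ) = 2 * (1 / 20) by norm_num, mul_pow]; ring

include hw'

lemma norm_Fterm_succ_sub_le (j : ℕ) :
    ‖Fterm k w q (j + 1) - Fterm k w' q (j + 1)‖ ≤ 8 * (1 / 5) ^ j * ‖w - w'‖ := by
  have hq_pow := norm_pow_triangular_le hq (by norm_num) j
  have hpow : ‖w ^ (j + 1 + 1) - w' ^ (j + 1 + 1)‖ ≤ 4 ^ (j + 1) * ‖w - w'‖ :=
    norm_pow_succ_sub_pow_succ_le_four_pow (norm_le_two_of_norm_sub_one_le hw)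
      (norm_le_two_of_norm_sub_one_le hw') _
  have hinv_pow : ‖w⁻¹ ^ (j + 1) - w'⁻¹ ^ (j + 1)‖ ≤ 4 ^ j * (4 * ‖w - w'‖) := by
    have hinv : ‖w⁻¹ - w'⁻¹‖ ≤ 4 * ‖w - w'‖ := by
      have := norm_inv_sub_inv_le (by norm_num) (half_le_norm_of_norm_sub_one_le hw)
        (half_le_norm_of_norm_sub_one_le hw')
      rwa [div_eq_mul_inv, mul_comm, show ((1 / 2 : ℝ) ^ 2)⁻¹ = 4 by norm_num] at this
    exact (norm_pow_succ_sub_pow_succ_le_four_pow (norm_inv_le_two_of_norm_sub_one_le hw)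
      (norm_inv_le_two_of_norm_sub_one_le hw') j).trans (by gcongr)
  have hdiff : Fterm k w q (j + 1) - Fterm k w' q (j + 1) = (-1) ^ (j + 1) *
      ((alphaCoef (j + 1) k : ℂ) * (w⁻¹ ^ (j + 1) - w'⁻¹ ^ (j + 1))
        - (alphaNegInv (j + 1) k : ℂ) * (w ^ (j + 1 + 1) - w' ^ (j + 1 + 1)))
      * q ^ ((j + 1) * (j + 1 + 1) / 2 - 1) := by
    rw [Fterm_succ, Fterm_succ]; ring
  rw [hdiff, norm_mul, norm_mul, norm_pow, norm_neg, norm_one, one_pow, one_mul]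
  calc _ ≤ (4 ^ j * (4 * ‖w - w'‖) + 4 ^ (j + 1) * ‖w - w'‖) * (1 / 20 : ℝ) ^ j := by
        gcongr
        exact (norm_ofReal_mul_sub_ofReal_mul_le (abs_alphaCoef_le_one _ _)
          (abs_alphaNegInv_le_one _ _) _ _).trans (add_le_add hinv_pow hpow)
    _ = 8 * (1 / 5) ^ j * ‖w - w'‖ := by
        rw [show (1 / 5 : ℝ) = 4 * (1 / 20) by norm_num, mul_pow]; ring

end TermBounds

theorem stmt11_general (k : ℕ) (q : ℂ) (hq : ‖q‖ ≤ 1 / 20)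
    (w w' : ℂ) (hw : ‖w - 1‖ ≤ 1 / 2) (hw' : ‖w' - 1‖ ≤ 1 / 2) :
    ‖FK k w q - FK k w' q‖ ≤ 10 * ‖w - w'‖ := by
  have hgeom : Summable fun j : ℕ ↦ 6 * (1 / 10 : ℝ) ^ j :=
    (summable_geometric_of_lt_one (by norm_num) (by norm_num)).mul_left 6
  have hsum := Summable.of_norm_bounded hgeom (norm_Fterm_succ_le k hq hw)
  have hsum' := Summable.of_norm_bounded hgeom (norm_Fterm_succ_le k hq hw')
  have hlip : HasSum (fun j : ℕ ↦ 8 * (1 / 5 : ℝ) ^ j * ‖w - w'‖) (10 * ‖w - w'‖) := by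
    have := ((hasSum_geometric_of_lt_one (r := (1 / 5 : ℝ)) (by norm_num) (by norm_num)).mul_left 8
      ).mul_right ‖w - w'‖
    rwa [show (8 : ℝ) * (1 - 1 / 5)⁻¹ = 10 by norm_num] at this
  rw [FK, FK, ← hsum.tsum_sub hsum']
  exact tsum_of_norm_bounded hlip (norm_Fterm_succ_sub_le k hq hw hw')

theorem stmt11 (k : ℕ) (hk : 1 ≤ k) (q : ℂ) (hq : ‖q‖ ≤ 1 / 20)
    (w w' : ℂ) (hw : ‖w - 1‖ ≤ 1 / 2) (hw' : ‖w' - 1‖ ≤ 1 / 2) :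
    ‖FK k w q - FK k w' q‖ ≤ 10 * ‖w - w'‖ :=
  stmt11_general k q hq w w' hw hw'
end
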